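/- arXiv:1209.5248 — 2 statements merged into one kernel-verified Lean document; each statement's English description precedes it below -/
import Mathlib

section
/- Let G be a group of order 16 with a subgroup K = ⟨h, j⟩ ≅ C4 × C2 of index 2 (h of order 4, j of order 2), such that there exists t ∈ G with j^t = h²j. If additionally some such t can be chosen of order 2, then G is isomorphic to the group N16 = ⟨(1,2,3,4)(5,6,7,8), (5,7)(6,8), (1,5)(2,6)(3,7)(4,8)⟩ ≤ Sym 8. -/
open Equiv

/-- The group `N16`, a group of order 16, as a subgroup of `Sym 8`
(with points labelled `0, …, 7` instead of `1, …, 8`). -/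
def N16 : Subgroup (Perm (Fin 8)) :=
  Subgroup.closure
    {c[0, 1, 2, 3] * c[4, 5, 6, 7], c[4, 6] * c[5, 7],
     c[0, 4] * c[1, 5] * c[2, 6] * c[3, 7]}

/-!
Since `K` has index 2 it is normal, so conjugation by the involution `t ∉ K` is an involutive
automorphism of `K ≅ C₄ × C₂` sending `j` to `h²j`. Among the candidates `h^a j^b` for the image
of `h`, only `h` and `h³` survive the requirement that conjugating twice gives back `h`; in the
second case `hj` is fixed instead. Either way `G` is generated by a central element `k` of order 4
and involutions `j`, `t` with `t j t = k² j`. The normal form `k^a j^b t^c` then identifies `G`,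
and likewise `N16`, with an explicit group `M16` of order 16.
-/

open Subgroup

section ZModPow

variable {G : Type*} [Group G] {g : G} {n : ℕ}

theorem pow_zmod_val_add [NeZero n] (hg : g ^ n = 1) (x y : ZMod n) :
    g ^ (x + y).val = g ^ x.val * g ^ y.val := by
  rw [ZMod.val_add, ← pow_eq_pow_mod _ hg, pow_add]

theorem pow_zmod_val_neg [NeZero n] (hg : g ^ n = 1) (x : ZMod n) :
    g ^ (-x).val = (g ^ x.val)⁻¹ :=
  eq_inv_of_mul_eq_one_left (by rw [← pow_zmod_val_add hg, neg_add_cancel, ZMod.val_zero, pow_zero])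

theorem pow_zmod_val_mul (hg : g ^ n = 1) (x y : ZMod n) :
    g ^ (x * y).val = g ^ (x.val * y.val) := by
  rw [ZMod.val_mul, ← pow_eq_pow_mod _ hg]

theorem pow_zmod_val_natCast (hg : g ^ n = 1) (k : ℕ) : g ^ (k : ZMod n).val = g ^ k := by
  rw [ZMod.val_natCast, ← pow_eq_pow_mod _ hg]

end ZModPow

section General

variable {G : Type*} [Group G]

theorem Subgroup.eq_top_of_le_of_index_eq_two {K H : Subgroup G} (hK : K.index = 2) (hle : K ≤ H)
    {t : G} (ht : t ∈ H) (htK : t ∉ K) : H = ⊤ := by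
  refine eq_top_iff.mpr fun g _ => ?_
  by_cases hg : g ∈ K
  · exact hle hg
  · have hgt : g * t ∈ K := (mul_mem_iff_of_index_two hK).mpr (iff_of_false hg htK)
    simpa using mul_mem (hle hgt) (inv_mem ht)

theorem commute_of_inv_mul_mul_eq {x t : G} (h : t⁻¹ * x * t = x) : Commute x t :=
  calc x * t = t * (t⁻¹ * x * t) := by group
    _ = t * x := by rw [h]

theorem exists_pow_zmod_val_mul_pow_of_mem_closure_pair {h j g : G}
    {m n : ℕ} [NeZero m] [NeZero n] (hm : h ^ m = 1) (hn : j ^ n = 1) (hhj : Commute h j)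
    (hg : g ∈ closure {h, j}) : ∃ (a : ZMod m) (b : ZMod n), g = h ^ a.val * j ^ b.val := by
  induction hg using closure_induction with
  | mem x hx =>
    rcases hx with rfl | rfl
    · exact ⟨1, 0, by rw [← Nat.cast_one, pow_zmod_val_natCast hm]; simp⟩
    · exact ⟨0, 1, by rw [← Nat.cast_one, pow_zmod_val_natCast hn]; simp⟩
  | one => exact ⟨0, 0, by simp⟩
  | mul x y _ _ ihx ihy =>
    obtain ⟨a, b, rfl⟩ := ihx
    obtain ⟨a', b', rfl⟩ := ihy
    refine ⟨a + a', b + b', ?_⟩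
    rw [pow_zmod_val_add hm, pow_zmod_val_add hn, (hhj.pow_pow _ _).symm.mul_mul_mul_comm]
  | inv x _ ihx =>
    obtain ⟨a, b, rfl⟩ := ihx
    refine ⟨-a, -b, ?_⟩
    rw [pow_zmod_val_neg hm, pow_zmod_val_neg hn, mul_inv_rev, ((hhj.pow_pow _ _).inv_inv).eq]

end General

theorem SemiconjBy.pow_pow_of_commute {G : Type*} [Monoid G] {t j z : G} (hzt : Commute z t)
    (hzj : Commute z j) (htj : SemiconjBy t j (z * j)) (r q : ℕ) :
    SemiconjBy (t ^ r) (j ^ q) (z ^ (r * q) * j ^ q) := by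
  have hq : SemiconjBy t (j ^ q) (z ^ q * j ^ q) := hzj.mul_pow q ▸ htj.pow_right q
  induction r with
  | zero => simp
  | succ r ih =>
    rw [pow_succ', add_mul, one_mul, pow_add, mul_assoc]
    exact ((hzt.pow_left _).symm.semiconjBy.mul_right hq).mul_left ih

/-- `⟨a, b, c⟩` stands for `h ^ a * j ^ b * t ^ c`, where `h` is central of order 4, `j` and `t`
are involutions and `t * j = h ^ 2 * j * t`. -/
@[ext]
structure M16 where
  a : ZMod 4
  b : ZMod 2
  c : ZMod 2
  deriving DecidableEq, Fintype

namespace M16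

def twist (x : ZMod 2) : ZMod 4 := 2 * x.val

theorem twist_add : ∀ x y : ZMod 2, twist (x + y) = twist x + twist y := by decide

theorem twist_add_self : ∀ x : ZMod 2, twist x + twist x = 0 := by decide

theorem val_twist : ∀ x : ZMod 2, (twist x).val = 2 * x.val := by decide

instance : Mul M16 := ⟨fun x y => ⟨x.a + y.a + twist (x.c * y.b), x.b + y.b, x.c + y.c⟩⟩
instance : One M16 := ⟨⟨0, 0, 0⟩⟩
instance : Inv M16 := ⟨fun x => ⟨-x.a + twist (x.c * x.b), -x.b, -x.c⟩⟩

@[simp] theorem mul_a (x y : M16) : (x * y).a = x.a + y.a + twist (x.c * y.b) := rfl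
@[simp] theorem mul_b (x y : M16) : (x * y).b = x.b + y.b := rfl
@[simp] theorem mul_c (x y : M16) : (x * y).c = x.c + y.c := rfl
@[simp] theorem one_a : (1 : M16).a = 0 := rfl
@[simp] theorem one_b : (1 : M16).b = 0 := rfl
@[simp] theorem one_c : (1 : M16).c = 0 := rfl
@[simp] theorem inv_a (x : M16) : x⁻¹.a = -x.a + twist (x.c * x.b) := rfl
@[simp] theorem inv_b (x : M16) : x⁻¹.b = -x.b := rfl
@[simp] theorem inv_c (x : M16) : x⁻¹.c = -x.c := rfl

instance : Group M16 where
  mul_assoc x y z := by ext <;> simp [mul_add, add_mul, twist_add] <;> ring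
  one_mul x := by ext <;> simp [twist]
  mul_one x := by ext <;> simp [twist]
  inv_mul_cancel x := by ext <;> simp [twist_add_self, CharTwo.add_self_eq_zero]

theorem card_eq : Nat.card M16 = 16 := by
  rw [Nat.card_eq_fintype_card]; rfl

structure Relations {G : Type*} [Group G] (h j t : G) : Prop where
  h_pow_four : h ^ 4 = 1
  j_sq : j ^ 2 = 1
  t_sq : t ^ 2 = 1
  commute_hj : Commute h j
  commute_ht : Commute h t
  t_mul_j : t * j = h ^ 2 * j * t

variable {G : Type*} [Group G] {h j t : G}

theorem Relations.mul_pow_mul_pow (hr : Relations h j t) (p q r p' q' r' : ℕ) :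
    h ^ p * j ^ q * t ^ r * (h ^ p' * j ^ q' * t ^ r') =
      h ^ p * h ^ p' * (h ^ 2) ^ (r * q') * (j ^ q * j ^ q') * (t ^ r * t ^ r') := by
  have hp' : Commute (h ^ p') (j ^ q * t ^ r) :=
    (hr.commute_hj.pow_pow _ _).mul_right (hr.commute_ht.pow_pow _ _)
  have htj : SemiconjBy (t ^ r) (j ^ q') ((h ^ 2) ^ (r * q') * j ^ q') :=
    SemiconjBy.pow_pow_of_commute (hr.commute_ht.pow_left 2) (hr.commute_hj.pow_left 2)
      (by rw [SemiconjBy, hr.t_mul_j]) r q'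
  have hz : Commute (j ^ q) ((h ^ 2) ^ (r * q')) :=
    ((hr.commute_hj.pow_left 2).pow_pow _ _).symm
  calc h ^ p * j ^ q * t ^ r * (h ^ p' * j ^ q' * t ^ r')
      = h ^ p * ((j ^ q * t ^ r) * h ^ p') * (j ^ q' * t ^ r') := by simp only [mul_assoc]
    _ = h ^ p * h ^ p' * (j ^ q * (t ^ r * j ^ q') * t ^ r') := by
      rw [← hp'.eq]; simp only [mul_assoc]
    _ = h ^ p * h ^ p' * ((j ^ q * (h ^ 2) ^ (r * q')) * j ^ q' * (t ^ r * t ^ r')) := by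
      rw [htj.eq]; simp only [mul_assoc]
    _ = _ := by rw [hz.eq]; simp only [mul_assoc]

def lift (hr : Relations h j t) : M16 →* G where
  toFun x := h ^ x.a.val * j ^ x.b.val * t ^ x.c.val
  map_one' := by simp
  map_mul' x y := by
    have hz : (h ^ 2) ^ 2 = 1 := by rw [← pow_mul, hr.h_pow_four]
    simp only [mul_a, mul_b, mul_c]
    rw [hr.mul_pow_mul_pow, pow_zmod_val_add hr.h_pow_four, pow_zmod_val_add hr.h_pow_four,
      val_twist, pow_mul, pow_zmod_val_mul hz, pow_zmod_val_add hr.j_sq, pow_zmod_val_add hr.t_sq]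

theorem lift_apply (hr : Relations h j t) (x : M16) :
    lift hr x = h ^ x.a.val * j ^ x.b.val * t ^ x.c.val := rfl

theorem range_lift (hr : Relations h j t) : (lift hr).range = closure {h, j, t} := by
  apply le_antisymm
  · rintro _ ⟨x, rfl⟩
    exact mul_mem (mul_mem (pow_mem (subset_closure (by simp)) _)
      (pow_mem (subset_closure (by simp)) _)) (pow_mem (subset_closure (by simp)) _)
  · rw [closure_le]
    rintro _ (rfl | rfl | rfl)
    · exact ⟨⟨1, 0, 0⟩, by simp [lift_apply, ZMod.val_one_eq_one_mod]⟩
    · exact ⟨⟨0, 1, 0⟩, by simp [lift_apply, ZMod.val_one_eq_one_mod]⟩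
    · exact ⟨⟨0, 0, 1⟩, by simp [lift_apply, ZMod.val_one_eq_one_mod]⟩

theorem lift_bijective (hr : Relations h j t) (hcard : Nat.card G = 16)
    (htop : closure {h, j, t} = ⊤) : Function.Bijective (lift hr) :=
  (Nat.bijective_iff_surjective_and_card _).mpr
    ⟨MonoidHom.range_eq_top.mp (range_lift hr ▸ htop), by rw [card_eq, hcard]⟩

set_option maxRecDepth 10000 in
theorem relations_perm : Relations (c[0, 1, 2, 3] * c[4, 5, 6, 7] : Perm (Fin 8))
    (c[4, 6] * c[5, 7]) (c[0, 4] * c[1, 5] * c[2, 6] * c[3, 7]) where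
  h_pow_four := by decide
  j_sq := by decide
  t_sq := by decide
  commute_hj := by unfold Commute SemiconjBy; decide
  commute_ht := by unfold Commute SemiconjBy; decide
  t_mul_j := by decide

set_option maxRecDepth 10000 in
noncomputable def mulEquivN16 : M16 ≃* N16 :=
  (MonoidHom.ofInjective ((injective_iff_map_eq_one (lift relations_perm)).mpr (by decide))).trans
    (MulEquiv.subgroupCongr (range_lift relations_perm))

end M16

section Fusion

variable {G : Type*} [Group G] {h j t : G}

theorem conj_eq_self_or_pow_three (h4 : h ^ 4 = 1) (hh2 : h ^ 2 ≠ 1) (j2 : j ^ 2 = 1)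
    (hhj : Commute h j) (t2 : t ^ 2 = 1) (htj : t⁻¹ * j * t = h ^ 2 * j) {a b : ℕ} (ha : a < 4)
    (hb : b < 2) (hth : t⁻¹ * h * t = h ^ a * j ^ b) :
    t⁻¹ * h * t = h ∨ t⁻¹ * h * t = h ^ 3 := by
  have htt : t⁻¹ = t := inv_eq_of_mul_eq_one_left (by rw [← pow_two, t2])
  have hσ : ∀ x, t⁻¹ * x * t = MulAut.conj t⁻¹ x := by simp
  have key : h ^ ((a * a + 2 * b) % 4) * j ^ ((b * a + b) % 2) = h := by
    rw [← pow_eq_pow_mod _ h4, ← pow_eq_pow_mod _ j2]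
    symm
    calc h = t⁻¹ * (t⁻¹ * h * t) * t := by
          rw [htt, ← mul_assoc, ← mul_assoc, ← pow_two, t2, one_mul, mul_assoc, ← pow_two, t2,
            mul_one]
      _ = (t⁻¹ * h * t) ^ a * (t⁻¹ * j * t) ^ b := by
          conv_lhs => rw [hth]
          simp only [hσ, map_mul, map_pow]
      _ = (h ^ a * j ^ b) ^ a * (h ^ 2 * j) ^ b := by rw [hth, htj]
      _ = h ^ (a * a + 2 * b) * j ^ (b * a + b) := by
        rw [(hhj.pow_pow a b).mul_pow, (hhj.pow_left 2).mul_pow, ← pow_mul, ← pow_mul, ← pow_mul,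
          (hhj.pow_pow _ _).symm.mul_mul_mul_comm, ← pow_add, ← pow_add]
  have hh1 : 1 ≠ h := fun e => hh2 (by rw [← e, one_pow])
  have hh3 : h ^ 3 ≠ h := fun e => hh2 (by rwa [pow_succ, mul_eq_right] at e)
  have hh2j : h ^ 2 * j ≠ h := fun e => hh2 <| by
    rw [pow_two, mul_assoc, mul_eq_left] at e
    calc h ^ 2 = (h * j) ^ 2 := by rw [hhj.mul_pow, j2, mul_one]
      _ = 1 := by rw [e, one_pow]
  interval_cases a <;> interval_cases b <;> norm_num at key hth ⊢
  all_goals first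
    | exact .inl hth | exact .inr hth | exact absurd key hh1 | exact absurd key hh3
    | exact absurd key hh2j

theorem exists_relations_of_conj_mem_closure (h4 : h ^ 4 = 1) (hh2 : h ^ 2 ≠ 1) (j2 : j ^ 2 = 1)
    (hhj : Commute h j) (t2 : t ^ 2 = 1) (htj : t⁻¹ * j * t = h ^ 2 * j)
    (hth : t⁻¹ * h * t ∈ closure {h, j}) : ∃ k, M16.Relations k j t ∧ h ∈ closure {k, j} := by
  obtain ⟨a, b, hab⟩ := exists_pow_zmod_val_mul_pow_of_mem_closure_pair h4 j2 hhj hth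
  have htt : t⁻¹ = t := inv_eq_of_mul_eq_one_left (by rw [← pow_two, t2])
  have hrel : t * j = h ^ 2 * j * t := by
    rw [← htj, htt, mul_assoc (t * j), ← pow_two, t2, mul_one]
  rcases conj_eq_self_or_pow_three h4 hh2 j2 hhj t2 htj (ZMod.val_lt a) (ZMod.val_lt b) hab
    with hc | hc
  · exact ⟨h, ⟨h4, j2, t2, hhj, commute_of_inv_mul_mul_eq hc, hrel⟩, subset_closure (by simp)⟩
  · have hk2 : (h * j) ^ 2 = h ^ 2 := by rw [hhj.mul_pow, j2, mul_one]
    refine ⟨h * j, ⟨by rw [show 4 = 2 * 2 from rfl, pow_mul, hk2, ← pow_mul, h4], j2, t2,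
      hhj.mul_left (Commute.refl j), commute_of_inv_mul_mul_eq ?_, hk2 ▸ hrel⟩, ?_⟩
    · calc t⁻¹ * (h * j) * t = (t⁻¹ * h * t) * (t⁻¹ * j * t) := by group
        _ = h ^ 4 * h * j := by rw [hc, htj, ← mul_assoc, ← pow_add, pow_succ]
        _ = h * j := by rw [h4, one_mul]
    · have hjj : h * j * j = h := by rw [mul_assoc, ← pow_two, j2, mul_one]
      have hmem : h * j * j ∈ closure {h * j, j} :=
        mul_mem (subset_closure (by simp)) (subset_closure (by simp))
      rwa [hjj] at hmem

end Fusion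

/-- Let `G` be a group of order 16 with a subgroup `K = ⟨h, j⟩ ≅ C4 × C2` of index 2
(`h` of order 4, `j` of order 2), and suppose there is an element `t` of order 2 with
`j^t = h²j`.  Then `G ≅ N16`. -/
theorem order_sixteen_with_involution_fusing_is_N16
    (G : Type*) [Group G] (hcard : Nat.card G = 16)
    (h j : G) (hh : orderOf h = 4) (hj : orderOf j = 2)
    (K : Subgroup G) (hK : K = Subgroup.closure {h, j})
    (hKiso : Nonempty (K ≃* Multiplicative (ZMod 4 × ZMod 2)))
    (hKindex : K.index = 2)
    (t : G) (ht2 : orderOf t = 2) (htconj : t⁻¹ * j * t = h ^ 2 * j) :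
    Nonempty (G ≃* N16) := by
  obtain ⟨e⟩ := hKiso
  have hcomm : ∀ x ∈ K, ∀ y ∈ K, Commute x y := fun x hx y hy => by
    have hxy : (⟨x, hx⟩ * ⟨y, hy⟩ : K) = ⟨y, hy⟩ * ⟨x, hx⟩ :=
      e.injective (by rw [map_mul, map_mul, mul_comm])
    exact congrArg Subtype.val hxy
  have hhK : h ∈ K := hK ▸ subset_closure (by simp)
  have hjK : j ∈ K := hK ▸ subset_closure (by simp)
  have hh2 : h ^ 2 ≠ 1 := fun hsq => by simpa [hh] using orderOf_dvd_of_pow_eq_one hsq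
  have htK : t ∉ K := fun ht => hh2 <| mul_eq_right.mp <| by
    rw [← htconj, mul_assoc, ← (hcomm t ht j hjK).eq, inv_mul_cancel_left]
  have hconj : t⁻¹ * h * t ∈ K := by
    simpa using (normal_of_index_eq_two hKindex).conj_mem h hhK t⁻¹
  obtain ⟨k, hr, hk⟩ := exists_relations_of_conj_mem_closure (hh ▸ pow_orderOf_eq_one h) hh2
    (hj ▸ pow_orderOf_eq_one j) (hcomm h hhK j hjK) (ht2 ▸ pow_orderOf_eq_one t) htconj (hK ▸ hconj)
  have htop : closure {k, j, t} = ⊤ := by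
    refine eq_top_of_le_of_index_eq_two hKindex ?_ (subset_closure (by simp)) htK
    rw [hK, closure_le]
    rintro _ (rfl | rfl)
    · exact closure_mono (by simp [Set.insert_subset_iff]) hk
    · exact subset_closure (by simp)
  exact ⟨(MulEquiv.ofBijective _ (M16.lift_bijective hr hcard htop)).symm.trans M16.mulEquivN16⟩
end

section
/- Let G be a group with a normal subgroup N such that G/N ≅ S5 and N ≅ A4, such that C_G(N) ∩ N = 1 and C_G(N)·N has index 2 in G with C_G(N) ≅ A5. Then G is isomorphic to the index-2 subgroup S5 ⋔ S4 of S5 × S4 consisting of pairs (σ, τ) with sgn(σ) = sgn(τ). -/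
/-!
Conjugation on `N ≅ A₄`, followed by the action of `Aut(A₄)` on the four Sylow 3-subgroups of
`A₄`, gives `g : G → S₄`. Its kernel is `C_G(N)`, because already `A₄` acts faithfully on its
Sylow 3-subgroups, and it is onto by counting (`|G| = 120 · 12`, `|C_G(N)| = 60`). With
`f : G → G/N ≅ S₅` this embeds `G` into `S₅ × S₄`, as `ker f ⊓ ker g = N ⊓ C_G(N) = 1`.
Both `sgn ∘ f` and `sgn ∘ g` vanish on the index-2 subgroup `C_G(N) ⊔ N`, since alternating
groups are generated by 3-cycles and so have no nontrivial sign characters; hence they agree,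
the image lies in `S₅ ⋔ S₄`, and it is all of it because both have order 1440.
-/

open Equiv

/-- The group `S5 ⋔ S4`: the index-2 subgroup of `S5 × S4` consisting of pairs
`(σ, τ)` with `sgn σ = sgn τ`. -/
def S5pitchforkS4 : Subgroup (Perm (Fin 5) × Perm (Fin 4)) :=
  MonoidHom.ker
    ((Equiv.Perm.sign.comp (MonoidHom.fst (Perm (Fin 5)) (Perm (Fin 4)))) *
     (Equiv.Perm.sign.comp (MonoidHom.snd (Perm (Fin 5)) (Perm (Fin 4)))))

open Equiv.Perm Subgroup

section IntUnits

variable {G : Type*} [Group G]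

theorem Int.units_eq_one_of_pow_eq_one_of_odd {u : ℤˣ} {n : ℕ} (hn : Odd n) (h : u ^ n = 1) :
    u = 1 := by
  rw [← pow_one u, ← Nat.odd_iff.mp hn, ← Int.units_pow_eq_pow_mod_two, h]

theorem MonoidHom.eq_of_ker_eq_of_intUnits {χ ψ : G →* ℤˣ} (h : χ.ker = ψ.ker) : χ = ψ := by
  ext g
  have hg : χ g = 1 ↔ ψ g = 1 := by simpa only [MonoidHom.mem_ker] using SetLike.ext_iff.mp h g
  rcases Int.units_eq_one_or (χ g) with h₁ | h₁ <;>
    rcases Int.units_eq_one_or (ψ g) with h₂ | h₂ <;> simp_all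

theorem MonoidHom.index_ker_eq_two_of_surjective {χ : G →* ℤˣ} (hχ : Function.Surjective χ) :
    χ.ker.index = 2 := by
  rw [index_ker, MonoidHom.range_eq_top.mpr hχ, card_top, Nat.card_eq_fintype_card,
    Fintype.card_units_int]

theorem Subgroup.eq_of_le_of_index_eq {H K : Subgroup G} (hle : H ≤ K) (h : H.index = K.index)
    (hK : K.index ≠ 0) : H = K := by
  have h₁ : H.relIndex K = 1 := by
    have := relIndex_mul_index hle
    rw [← h] at this hK
    exact (Nat.mul_eq_right hK).mp this
  exact le_antisymm hle (relIndex_eq_one.mp h₁)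

theorem MonoidHom.ker_eq_of_le_of_index_eq_two {χ : G →* ℤˣ} (hχ : Function.Surjective χ)
    {H : Subgroup G} (hH : H.index = 2) (hHχ : H ≤ χ.ker) : χ.ker = H := by
  have hχ₂ := MonoidHom.index_ker_eq_two_of_surjective hχ
  exact (eq_of_le_of_index_eq hHχ (hH.trans hχ₂.symm) (by omega)).symm

theorem MonoidHom.eq_of_le_ker_of_index_eq_two {χ ψ : G →* ℤˣ} (hχ : Function.Surjective χ)
    (hψ : Function.Surjective ψ) {H : Subgroup G} (hH : H.index = 2) (hHχ : H ≤ χ.ker)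
    (hHψ : H ≤ ψ.ker) : χ = ψ :=
  MonoidHom.eq_of_ker_eq_of_intUnits <| by
    rw [MonoidHom.ker_eq_of_le_of_index_eq_two hχ hH hHχ,
      MonoidHom.ker_eq_of_le_of_index_eq_two hψ hH hHψ]

end IntUnits

theorem alternatingGroup.monoidHom_intUnits_eq_one {α : Type*} [Fintype α] [DecidableEq α]
    (χ : alternatingGroup α →* ℤˣ) : χ = 1 := by
  have hgen : closure {σ : Perm α | σ.IsThreeCycle} ≤ χ.ker.map (alternatingGroup α).subtype := by
    rw [closure_le]
    intro σ hσ
    refine ⟨⟨σ, hσ.mem_alternatingGroup⟩, ?_, rfl⟩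
    refine Int.units_eq_one_of_pow_eq_one_of_odd (n := 3) (by decide) ?_
    rw [← map_pow, ← map_one χ]
    congr 1
    ext1
    simp [← hσ.orderOf, pow_orderOf_eq_one]
  ext x
  rw [closure_three_cycles_eq_alternating] at hgen
  simpa [mem_map_iff_mem (alternatingGroup α).subtype_injective] using hgen x.2

theorem Subgroup.le_ker_of_mulEquiv_alternatingGroup {G α : Type*} [Group G] [Fintype α]
    [DecidableEq α] {K : Subgroup G} (e : K ≃* alternatingGroup α) (χ : G →* ℤˣ) : K ≤ χ.ker := by
  intro k hk
  simpa using DFunLike.congr_fun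
    (alternatingGroup.monoidHom_intUnits_eq_one (χ.comp (K.subtype.comp e.symm.toMonoidHom)))
    (e ⟨k, hk⟩)

theorem MulAut.congr_conj {G H : Type*} [Group G] [Group H] (e : G ≃* H) (g : G) :
    MulAut.congr e (MulAut.conj g) = MulAut.conj (e g) := by
  ext
  simp

theorem Subgroup.ker_comp_conjNormal_eq_centralizer {G H : Type*} [Group G] [Group H]
    (N : Subgroup G) [N.Normal] (ρ : MulAut N →* H)
    (hρ : ∀ n : N, ρ (MulAut.conj n) = 1 → n = 1) :
    (ρ.comp MulAut.conjNormal).ker = centralizer (N : Set G) := by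
  refine le_antisymm ?_ fun c hc ↦ ?_
  · have hbot : (ρ.comp MulAut.conjNormal).ker ⊓ N = ⊥ := by
      refine eq_bot_iff.mpr fun m ⟨hm, hmN⟩ ↦ ?_
      have := hρ ⟨m, hmN⟩ (by rwa [← MulAut.conjNormal_val])
      exact congrArg Subtype.val this
    rw [← commutator_eq_bot_iff_le_centralizer, eq_bot_iff, ← hbot]
    exact commutator_le_inf _ _
  · have : MulAut.conjNormal c = (1 : MulAut N) := by
      ext n
      rw [MulAut.conjNormal_apply, ← mem_centralizer_iff.mp hc n n.2, mul_inv_cancel_right]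
      rfl
    simp [this]

namespace alternatingGroup

local notation "A₄" => alternatingGroup (Fin 4)

theorem nat_card_fin_four : Nat.card A₄ = 12 := by
  rw [nat_card_alternatingGroup, Nat.card_fin]; rfl

theorem index_zpowers_fin_four {c : A₄} (hc : orderOf c = 3) : (zpowers c).index = 4 := by
  have := card_mul_index (zpowers c)
  rw [Nat.card_zpowers, hc, nat_card_fin_four] at this
  omega

theorem normalizer_zpowers_fin_four {c : A₄} (hc : orderOf c = 3) :
    normalizer (zpowers c : Set A₄) = zpowers c := by
  have key : ∀ d x : A₄, d ^ 3 = 1 → d ≠ 1 → x * d * x⁻¹ ∈ (Finset.range 3).image (d ^ ·) →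
      x ∈ (Finset.range 3).image (d ^ ·) := by
    decide
  have hmem (y : A₄) : y ∈ zpowers c ↔ y ∈ (Finset.range 3).image (c ^ ·) := by
    rw [mem_zpowers_iff_mem_range_orderOf, hc]
  refine le_antisymm (fun x hx ↦ ?_) le_normalizer
  have hconj : x * c * x⁻¹ ∈ zpowers c := (mem_normalizer_iff.mp hx c).mp (mem_zpowers c)
  rw [hmem] at hconj ⊢
  exact key c x (hc ▸ pow_orderOf_eq_one c) (by rintro rfl; simp at hc) hconj

noncomputable def sylowThreeOfOrderOf {c : A₄} (hc : orderOf c = 3) : Sylow 3 A₄ :=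
  (IsPGroup.of_card (n := 1) (by rw [Nat.card_zpowers, hc, pow_one])).toSylow
    (by rw [index_zpowers_fin_four hc]; decide)

theorem normalizer_sylowThreeOfOrderOf {c : A₄} (hc : orderOf c = 3) :
    normalizer (sylowThreeOfOrderOf hc : Set A₄) = zpowers c := by
  change normalizer ((sylowThreeOfOrderOf hc : Subgroup A₄) : Set A₄) = zpowers c
  rw [sylowThreeOfOrderOf, IsPGroup.toSylow_coe, normalizer_zpowers_fin_four hc]

def threeCycle₁ : A₄ := ⟨c[0, 1, 2], mem_alternatingGroup.mpr (by decide)⟩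
def threeCycle₂ : A₄ := ⟨c[0, 1, 3], mem_alternatingGroup.mpr (by decide)⟩

theorem orderOf_threeCycle₁ : orderOf threeCycle₁ = 3 := orderOf_eq_prime (by decide) (by decide)
theorem orderOf_threeCycle₂ : orderOf threeCycle₂ = 3 := orderOf_eq_prime (by decide) (by decide)

theorem card_sylow_three_fin_four : Nat.card (Sylow 3 A₄) = 4 := by
  rw [Sylow.card_eq_index_normalizer (sylowThreeOfOrderOf orderOf_threeCycle₁)]
  rw [normalizer_sylowThreeOfOrderOf, index_zpowers_fin_four orderOf_threeCycle₁]

theorem eq_one_of_forall_smul_sylow_three_eq {a : A₄} (ha : ∀ P : Sylow 3 A₄, a • P = P) :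
    a = 1 := by
  have key : ∀ a : A₄, a ∈ (Finset.range 3).image (threeCycle₁ ^ ·) →
      a ∈ (Finset.range 3).image (threeCycle₂ ^ ·) → a = 1 := by
    decide
  have hmem {c : A₄} (hc : orderOf c = 3) : a ∈ (Finset.range 3).image (c ^ ·) := by
    rw [← hc, ← mem_zpowers_iff_mem_range_orderOf, ← normalizer_sylowThreeOfOrderOf hc]
    exact Sylow.smul_eq_iff_mem_normalizer.mp (ha _)
  exact key a (hmem orderOf_threeCycle₁) (hmem orderOf_threeCycle₂)

noncomputable def mulAutFinFourToPerm : MulAut A₄ →* Perm (Fin 4) :=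
  (Finite.equivFinOfCardEq card_sylow_three_fin_four).permCongrHom.toMonoidHom.comp
    (MulAction.toPermHom (MulAut A₄) (Sylow 3 A₄))

theorem eq_one_of_mulAutFinFourToPerm_conj_eq_one {a : A₄}
    (ha : mulAutFinFourToPerm (MulAut.conj a) = 1) : a = 1 := by
  refine eq_one_of_forall_smul_sylow_three_eq fun P ↦ ?_
  have h : MulAction.toPermHom (MulAut A₄) (Sylow 3 A₄) (MulAut.conj a) = 1 :=
    (MulEquiv.map_eq_one_iff
      (Finite.equivFinOfCardEq card_sylow_three_fin_four).permCongrHom).mp ha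
  exact Equiv.ext_iff.mp h P

end alternatingGroup

section Pitchfork

variable {H₁ H₂ : Type*} [Group H₁] [Group H₂]

def Subgroup.pitchfork (χ₁ : H₁ →* ℤˣ) (χ₂ : H₂ →* ℤˣ) : Subgroup (H₁ × H₂) :=
  ((χ₁.comp (MonoidHom.fst H₁ H₂)) * (χ₂.comp (MonoidHom.snd H₁ H₂))).ker

theorem Subgroup.mem_pitchfork {χ₁ : H₁ →* ℤˣ} {χ₂ : H₂ →* ℤˣ} {x : H₁ × H₂} :
    x ∈ pitchfork χ₁ χ₂ ↔ χ₁ x.1 = χ₂ x.2 := by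
  simp [pitchfork, mul_eq_one_iff_eq_inv]

theorem Subgroup.index_pitchfork {χ₁ : H₁ →* ℤˣ} (hχ₁ : Function.Surjective χ₁)
    (χ₂ : H₂ →* ℤˣ) : (pitchfork χ₁ χ₂).index = 2 := by
  refine MonoidHom.index_ker_eq_two_of_surjective fun u ↦ ?_
  obtain ⟨h, rfl⟩ := hχ₁ u
  exact ⟨(h, 1), by simp⟩

theorem Subgroup.nonempty_mulEquiv_pitchfork {G : Type*} [Group G] [Finite H₁] [Finite H₂]
    {f : G →* H₁} {g : G →* H₂} {χ₁ : H₁ →* ℤˣ} {χ₂ : H₂ →* ℤˣ} (hχ₁ : Function.Surjective χ₁)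
    (hker : f.ker ⊓ g.ker = ⊥) (hχ : χ₁.comp f = χ₂.comp g)
    (hcard : 2 * Nat.card G = Nat.card H₁ * Nat.card H₂) :
    Nonempty (G ≃* pitchfork χ₁ χ₂) := by
  have hinj : Function.Injective (f.prod g) := by
    rw [← MonoidHom.ker_eq_bot_iff, MonoidHom.ker_prod, hker]
  have hle : (f.prod g).range ≤ pitchfork χ₁ χ₂ := by
    rintro _ ⟨x, rfl⟩
    exact mem_pitchfork.mpr (DFunLike.congr_fun hχ x)
  have hcard_range : Nat.card (f.prod g).range = Nat.card G :=
    Nat.card_congr (MonoidHom.ofInjective hinj).toEquiv.symm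
  have hcard_pitchfork : 2 * Nat.card (pitchfork χ₁ χ₂) = Nat.card H₁ * Nat.card H₂ := by
    rw [← index_pitchfork hχ₁ χ₂, mul_comm, card_mul_index, Nat.card_prod]
  have heq : (f.prod g).range = pitchfork χ₁ χ₂ := eq_of_le_of_card_ge hle (by omega)
  exact ⟨(MonoidHom.ofInjective hinj).trans (MulEquiv.subgroupCongr heq)⟩

end Pitchfork

/-- Let `G` have a normal subgroup `N ≅ A4` with `G/N ≅ S5`, `C_G(N) ∩ N = 1`,
`C_G(N)·N` of index 2 in `G` and `C_G(N) ≅ A5`.  Then `G ≅ S5 ⋔ S4`. -/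
theorem iso_S5_pitchfork_S4 (G : Type*) [Group G]
    (N : Subgroup G) [N.Normal]
    (hN : Nonempty (N ≃* alternatingGroup (Fin 4)))
    (hquot : Nonempty ((G ⧸ N) ≃* Perm (Fin 5)))
    (hcap : Subgroup.centralizer (N : Set G) ⊓ N = ⊥)
    (hindex : (Subgroup.centralizer (N : Set G) ⊔ N).index = 2)
    (hC : Nonempty (Subgroup.centralizer (N : Set G) ≃* alternatingGroup (Fin 5))) :
    Nonempty (G ≃* S5pitchforkS4) := by
  obtain ⟨e₄⟩ := hN
  obtain ⟨e₅⟩ := hquot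
  obtain ⟨eC⟩ := hC
  set C := centralizer (N : Set G)
  let f : G →* Perm (Fin 5) := (e₅ : G ⧸ N →* Perm (Fin 5)).comp (QuotientGroup.mk' N)
  let g : G →* Perm (Fin 4) :=
    (alternatingGroup.mulAutFinFourToPerm.comp (MulAut.congr e₄ : MulAut N →* _)).comp
      MulAut.conjNormal
  have hf : Function.Surjective f := e₅.surjective.comp (QuotientGroup.mk'_surjective N)
  have hf_ker : f.ker = N := by
    rw [MonoidHom.ker_mulEquiv_comp, QuotientGroup.ker_mk']
  have hg_ker : g.ker = C := ker_comp_conjNormal_eq_centralizer N _ fun n hn ↦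
    e₄.map_eq_one_iff.mp <| alternatingGroup.eq_one_of_mulAutFinFourToPerm_conj_eq_one <| by
      rwa [← MulAut.congr_conj]
  have hcard_G : Nat.card G = 120 * 12 := by
    rw [card_eq_card_quotient_mul_card_subgroup N, Nat.card_congr e₅.toEquiv,
      Nat.card_congr e₄.toEquiv, Nat.card_perm, alternatingGroup.nat_card_fin_four, Nat.card_fin]
    rfl
  have hcard_C : Nat.card C = 60 := by
    rw [Nat.card_congr eC.toEquiv, nat_card_alternatingGroup, Nat.card_fin]; rfl
  have hg : Function.Surjective g := by
    have hindex_C := card_mul_index C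
    rw [hcard_C, hcard_G] at hindex_C
    rw [← MonoidHom.range_eq_top, ← card_eq_iff_eq_top, ← index_ker, hg_ker, Nat.card_perm,
      Nat.card_fin]
    change _ = 24
    omega
  have hsign : sign.comp f = sign.comp g := MonoidHom.eq_of_le_ker_of_index_eq_two
    (MonoidHom.coe_comp sign f ▸ (sign_surjective _).comp hf)
    (MonoidHom.coe_comp sign g ▸ (sign_surjective _).comp hg) hindex
    (sup_le (le_ker_of_mulEquiv_alternatingGroup eC _)
      (hf_ker ▸ MonoidHom.comap_ker sign f ▸ f.ker_le_comap _))
    (sup_le (hg_ker ▸ MonoidHom.comap_ker sign g ▸ g.ker_le_comap _)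
      (le_ker_of_mulEquiv_alternatingGroup e₄ _))
  show Nonempty (G ≃* pitchfork sign sign)
  exact nonempty_mulEquiv_pitchfork (sign_surjective _) (by rw [hf_ker, hg_ker, inf_comm, hcap])
    hsign (by rw [hcard_G, Nat.card_perm, Nat.card_perm, Nat.card_fin, Nat.card_fin]; rfl)
end
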